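/- arXiv:2605.09456 — 2 statements merged into one kernel-verified Lean document; each statement's English description precedes it below -/
import Mathlib

section
/- Let ρ and π be probability density functions on a probability (or finite measure) space, with π bounded below by λ > 0. Then the relative entropy satisfies H(ρ|π) := ∫ ρ·log(ρ/π) ≤ (1/λ)·∫ (ρ − π)², i.e. the relative entropy is bounded above by λ⁻¹ times the squared L²-distance. -/
/-!
Pointwise, `log t ≤ t - 1` gives `ρ log (ρ/π) ≤ ρ (ρ/π - 1) = (ρ - π)²/π + (ρ - π)`, and
`π ≥ lam` bounds the first term by `(ρ - π)²/lam`. Integrating, the linear term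
`∫ (ρ - π)` vanishes because both densities have mass one.
-/

open MeasureTheory

lemma Real.mul_log_div_le_sq_div_add_sub {a b : ℝ} (ha : 0 ≤ a) (hb : 0 < b) :
    a * Real.log (a / b) ≤ (a - b) ^ 2 / b + (a - b) := by
  have hlog : a * Real.log (a / b) ≤ a * (a / b - 1) := by
    rcases ha.eq_or_lt with rfl | ha
    · simp
    · exact mul_le_mul_of_nonneg_left (Real.log_le_sub_one_of_pos (by positivity)) ha.le
  calc a * Real.log (a / b) ≤ a * (a / b - 1) := hlog
    _ = (a - b) ^ 2 / b + (a - b) := by field_simp; ring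

lemma Real.mul_log_div_le_sq_div_add_sub_of_le {a b lam : ℝ} (ha : 0 ≤ a) (hlam : 0 < lam)
    (hb : lam ≤ b) : a * Real.log (a / b) ≤ (a - b) ^ 2 / lam + (a - b) := by
  have hsq : (a - b) ^ 2 / b ≤ (a - b) ^ 2 / lam :=
    div_le_div_of_nonneg_left (sq_nonneg _) hlam hb
  linarith [Real.mul_log_div_le_sq_div_add_sub ha (hlam.trans_le hb)]

theorem MeasureTheory.integral_mul_log_div_le_of_integral_eq {X : Type*} [MeasurableSpace X]
    {μ : Measure X} {ρ π : X → ℝ} {lam : ℝ} (hlam : 0 < lam)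
    (hρ0 : ∀ᵐ x ∂μ, 0 ≤ ρ x) (hπlam : ∀ᵐ x ∂μ, lam ≤ π x)
    (hρ : Integrable ρ μ) (hπ : Integrable π μ) (hρπ : ∫ x, ρ x ∂μ = ∫ x, π x ∂μ)
    (hsq : Integrable (fun x => (ρ x - π x) ^ 2) μ)
    (hint : Integrable (fun x => ρ x * Real.log (ρ x / π x)) μ) :
    ∫ x, ρ x * Real.log (ρ x / π x) ∂μ ≤ (1 / lam) * ∫ x, (ρ x - π x) ^ 2 ∂μ := by
  have hdiff : Integrable (fun x => ρ x - π x) μ := hρ.sub hπ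
  have hmass : ∫ x, (ρ x - π x) ∂μ = 0 := by rw [integral_sub hρ hπ, hρπ, sub_self]
  calc ∫ x, ρ x * Real.log (ρ x / π x) ∂μ
      ≤ ∫ x, ((ρ x - π x) ^ 2 / lam + (ρ x - π x)) ∂μ := by
        refine integral_mono_ae hint ((hsq.div_const lam).add hdiff) ?_
        filter_upwards [hρ0, hπlam] with x hρx hπx
        exact Real.mul_log_div_le_sq_div_add_sub_of_le hρx hlam hπx
    _ = (1 / lam) * ∫ x, (ρ x - π x) ^ 2 ∂μ := by
        rw [integral_add (hsq.div_const lam) hdiff, integral_div, hmass]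
        ring

theorem relEntropy_le_L2_general {X : Type*} [MeasurableSpace X] (μ : Measure X) [IsFiniteMeasure μ]
    (ρ π : X → ℝ) (lam : ℝ) (hlam : 0 < lam)
    (hρ0 : ∀ᵐ x ∂μ, 0 ≤ ρ x) (hπlam : ∀ᵐ x ∂μ, lam ≤ π x)
    (hρ1 : ∫ x, ρ x ∂μ = 1) (hπ1 : ∫ x, π x ∂μ = 1)
    (hρL2 : MemLp ρ 2 μ) (hπL2 : MemLp π 2 μ)
    (hint : Integrable (fun x => ρ x * Real.log (ρ x / π x)) μ) :
    ∫ x, ρ x * Real.log (ρ x / π x) ∂μ ≤ (1 / lam) * ∫ x, (ρ x - π x) ^ 2 ∂μ :=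
  integral_mul_log_div_le_of_integral_eq hlam hρ0 hπlam (hρL2.integrable one_le_two)
    (hπL2.integrable one_le_two) (hρ1.trans hπ1.symm) (hρL2.sub hπL2).integrable_sq hint

/-- Let `ρ` and `π` be probability densities on a finite measure space, with `π` bounded
below by `lam > 0`.  Then the relative entropy `H(ρ|π) = ∫ ρ log(ρ/π)` is bounded above
by `lam⁻¹` times the squared `L²`-distance between `ρ` and `π`. -/
theorem relEntropy_le_L2 {X : Type*} [MeasurableSpace X] (μ : Measure X) [IsFiniteMeasure μ]
    (ρ π : X → ℝ) (lam : ℝ) (hlam : 0 < lam)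
    (hρmeas : Measurable ρ) (hπmeas : Measurable π)
    (hρ0 : ∀ᵐ x ∂μ, 0 ≤ ρ x) (hπlam : ∀ᵐ x ∂μ, lam ≤ π x)
    (hρ1 : ∫ x, ρ x ∂μ = 1) (hπ1 : ∫ x, π x ∂μ = 1)
    (hρL2 : MemLp ρ 2 μ) (hπL2 : MemLp π 2 μ)
    (hint : Integrable (fun x => ρ x * Real.log (ρ x / π x)) μ) :
    ∫ x, ρ x * Real.log (ρ x / π x) ∂μ ≤ (1 / lam) * ∫ x, (ρ x - π x) ^ 2 ∂μ :=
  relEntropy_le_L2_general μ ρ π lam hlam hρ0 hπlam hρ1 hπ1 hρL2 hπL2 hint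
end

section
/- Let ρ and π be probability density functions on a finite measure space, both bounded above by Λ. Then the relative entropy satisfies H(ρ|π) ≥ (1/(2Λ))·∫ (ρ − π)². -/
/-!
With `r = ρ / π`, the integrand `ρ log (ρ / π) - ρ + π` equals `π (r log r - r + 1)`, which is at
least `(ρ - π)² / (2 max ρ π) ≥ (ρ - π)² / (2 Λ)`. Integrating, the terms `-ρ + π` cancel since
both densities have mass one. The scalar bound on `r log r - r + 1` comes from
`log r ≥ 2 (r - 1) / (r + 1)` for `r ≥ 1` and `log r ≥ (r - r⁻¹) / 2` for `r ≤ 1`.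
-/

section

open Real Set

lemma hasDerivAt_sub_inv_div_two_sub_log {x : ℝ} (hx : x ≠ 0) :
    HasDerivAt (fun t => (t - t⁻¹) / 2 - log t) ((1 - x⁻¹) ^ 2 / 2) x :=
  ((((hasDerivAt_id' x).sub (hasDerivAt_inv hx)).div_const 2).sub (hasDerivAt_log hx)).congr_deriv
    (by field_simp; ring)

lemma monotoneOn_sub_inv_div_two_sub_log :
    MonotoneOn (fun x : ℝ => (x - x⁻¹) / 2 - log x) (Ioi 0) := by
  refine monotoneOn_of_hasDerivWithinAt_nonneg (convex_Ioi 0)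
    (fun x hx => (hasDerivAt_sub_inv_div_two_sub_log (ne_of_gt hx)).continuousAt.continuousWithinAt)
    (fun x hx => (hasDerivAt_sub_inv_div_two_sub_log (ne_of_gt (interior_subset hx))).hasDerivWithinAt)
    (fun x _ => by positivity)

lemma sub_inv_div_two_le_log {x : ℝ} (h0 : 0 < x) (h1 : x ≤ 1) : (x - x⁻¹) / 2 ≤ log x := by
  have hmono := monotoneOn_sub_inv_div_two_sub_log h0 (mem_Ioi.2 one_pos) h1
  simp only [inv_one, sub_self, zero_div, log_one] at hmono
  linarith

lemma two_mul_sub_one_div_add_one_le_log {x : ℝ} (h : 1 ≤ x) :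
    2 * (x - 1) / (x + 1) ≤ log x := by
  convert le_log_one_add_of_nonneg (sub_nonneg.2 h) using 2 <;> ring

lemma sq_sub_one_div_le_mul_log_sub_add_one {r : ℝ} (hr : 0 ≤ r) :
    (r - 1) ^ 2 / (2 * max r 1) ≤ r * log r - r + 1 := by
  rcases le_total r 1 with h1 | h1
  · rw [max_eq_right h1]
    rcases hr.eq_or_lt with rfl | h0
    · norm_num
    have hlog := mul_le_mul_of_nonneg_left (sub_inv_div_two_le_log h0 h1) hr
    have hsimp : r * ((r - r⁻¹) / 2) = (r ^ 2 - 1) / 2 := by field_simp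
    linarith
  · rw [max_eq_left h1]
    have hlog := mul_le_mul_of_nonneg_left (two_mul_sub_one_div_add_one_le_log h1) hr
    have hden : (r - 1) ^ 2 / (2 * r) ≤ (r - 1) ^ 2 / (r + 1) :=
      div_le_div_of_nonneg_left (sq_nonneg _) (by linarith) (by linarith)
    have hsimp : r * (2 * (r - 1) / (r + 1)) - r + 1 = (r - 1) ^ 2 / (r + 1) := by
      field_simp; ring
    linarith

lemma sq_sub_div_two_max_le_mul_log_div_sub_add {a b : ℝ} (ha : 0 ≤ a) (hb : 0 < b) :
    (a - b) ^ 2 / (2 * max a b) ≤ a * log (a / b) - a + b := by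
  have hmax : max a b = b * max (a / b) 1 := by
    rw [mul_max_of_nonneg _ _ hb.le, mul_div_cancel₀ _ hb.ne', mul_one]
  calc (a - b) ^ 2 / (2 * max a b) = b * ((a / b - 1) ^ 2 / (2 * max (a / b) 1)) := by
        rw [hmax]; field_simp
    _ ≤ b * (a / b * log (a / b) - a / b + 1) :=
        mul_le_mul_of_nonneg_left (sq_sub_one_div_le_mul_log_sub_add_one (by positivity)) hb.le
    _ = a * log (a / b) - a + b := by field_simp

end

open MeasureTheory

theorem relEntropy_ge_L2_general {X : Type*} [MeasurableSpace X] (μ : Measure X)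
    (ρ π : X → ℝ) (Λ : ℝ)
    (hρ0 : ∀ᵐ x ∂μ, 0 ≤ ρ x) (hπ0 : ∀ᵐ x ∂μ, 0 < π x)
    (hρΛ : ∀ᵐ x ∂μ, ρ x ≤ Λ) (hπΛ : ∀ᵐ x ∂μ, π x ≤ Λ)
    (hρ1 : ∫ x, ρ x ∂μ = 1) (hπ1 : ∫ x, π x ∂μ = 1)
    (hint : Integrable (fun x => ρ x * Real.log (ρ x / π x)) μ)
    (hsq : Integrable (fun x => (ρ x - π x) ^ 2) μ) :
    (1 / (2 * Λ)) * ∫ x, (ρ x - π x) ^ 2 ∂μ ≤ ∫ x, ρ x * Real.log (ρ x / π x) ∂μ := by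
  have hρint : Integrable ρ μ := .of_integral_ne_zero (by rw [hρ1]; exact one_ne_zero)
  have hπint : Integrable π μ := .of_integral_ne_zero (by rw [hπ1]; exact one_ne_zero)
  have hdiff : Integrable (fun x => ρ x * Real.log (ρ x / π x) - ρ x) μ := hint.sub hρint
  have hpointwise : ∀ᵐ x ∂μ,
      (ρ x - π x) ^ 2 / (2 * Λ) ≤ ρ x * Real.log (ρ x / π x) - ρ x + π x := by
    filter_upwards [hρ0, hπ0, hρΛ, hπΛ] with x hρx hπx hρxΛ hπxΛ
    calc (ρ x - π x) ^ 2 / (2 * Λ) ≤ (ρ x - π x) ^ 2 / (2 * max (ρ x) (π x)) := by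
          gcongr
          exact max_le hρxΛ hπxΛ
      _ ≤ _ := sq_sub_div_two_max_le_mul_log_div_sub_add hρx hπx
  calc (1 / (2 * Λ)) * ∫ x, (ρ x - π x) ^ 2 ∂μ = ∫ x, (ρ x - π x) ^ 2 / (2 * Λ) ∂μ := by
        rw [integral_div, one_div_mul_eq_div]
    _ ≤ ∫ x, ρ x * Real.log (ρ x / π x) - ρ x + π x ∂μ :=
        integral_mono_ae (hsq.div_const _) (hdiff.add hπint) hpointwise
    _ = ∫ x, ρ x * Real.log (ρ x / π x) ∂μ := by
        rw [integral_add hdiff hπint, integral_sub hint hρint, hρ1, hπ1, sub_add_cancel]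

/-- Let `ρ` and `π` be probability densities on a finite measure space, both bounded above
by `Λ`.  Then the relative entropy satisfies `H(ρ|π) ≥ (1/(2Λ)) ∫ (ρ − π)²`. -/
theorem relEntropy_ge_L2 {X : Type*} [MeasurableSpace X] (μ : Measure X) [IsFiniteMeasure μ]
    (ρ π : X → ℝ) (Λ : ℝ) (hΛ : 0 < Λ)
    (hρmeas : Measurable ρ) (hπmeas : Measurable π)
    (hρ0 : ∀ᵐ x ∂μ, 0 ≤ ρ x) (hπ0 : ∀ᵐ x ∂μ, 0 < π x)
    (hρΛ : ∀ᵐ x ∂μ, ρ x ≤ Λ) (hπΛ : ∀ᵐ x ∂μ, π x ≤ Λ)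
    (hρ1 : ∫ x, ρ x ∂μ = 1) (hπ1 : ∫ x, π x ∂μ = 1)
    (hint : Integrable (fun x => ρ x * Real.log (ρ x / π x)) μ)
    (hsq : Integrable (fun x => (ρ x - π x) ^ 2) μ) :
    (1 / (2 * Λ)) * ∫ x, (ρ x - π x) ^ 2 ∂μ ≤ ∫ x, ρ x * Real.log (ρ x / π x) ∂μ :=
  relEntropy_ge_L2_general μ ρ π Λ hρ0 hπ0 hρΛ hπΛ hρ1 hπ1 hint hsq
end
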